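/- Let A be an epsilon-strongly G-graded ring, R = A_1, n ∈ ℕ, and give B = M_n(A) the G-grading with components B_g = M_n(A_g); then B is epsilon-strongly graded with ε-elements E_g = ε_g·I_n. The ring B is an epsilon-crossed product if and only if there exists a map κ : G → M_n(A) such that κ(g) ∈ M_n(A_g) and M_n(R)·κ(g) = M_n(A_g) = κ(g)·M_n(R) for all g ∈ G, where M_n(R)·κ(g) denotes the additive group generated by the products X·κ(g) with X ∈ M_n(R), and similarly for κ(g)·M_n(R). -/

import Mathlib

/-- A `G`-grading on a unital ring `A`: a family of additive subgroups with
`A_g A_h ⊆ A_{gh}`, `1 ∈ A₁`, whose internal direct sum is `A`. -/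
structure RingGrading (G : Type*) [Group G] [DecidableEq G]
    (A : Type*) [Ring A] where
  comp : G → AddSubgroup A
  one_mem : (1 : A) ∈ comp 1
  mul_mem : ∀ ⦃g h : G⦄ ⦃a b : A⦄, a ∈ comp g → b ∈ comp h → a * b ∈ comp (g * h)
  isInternal : DirectSum.IsInternal comp

variable {G : Type*} [Group G] [DecidableEq G] {A : Type*} [Ring A]

/-- The additive subgroup `S T` generated by products of elements of `S` and `T`. -/
def sgMul (S T : AddSubgroup A) : AddSubgroup A :=
  AddSubgroup.closure {x : A | ∃ s ∈ S, ∃ t ∈ T, x = s * t}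

/-- `ε` is a family of epsilon-elements for the grading `𝒜`:
`ε_g ∈ A_g A_{g⁻¹}` and `ε_g a = a = a ε_{g⁻¹}` for all `a ∈ A_g`. -/
structure IsEpsilonFamily (𝒜 : RingGrading G A) (ε : G → A) : Prop where
  mem : ∀ g : G, ε g ∈ sgMul (𝒜.comp g) (𝒜.comp g⁻¹)
  mul_left : ∀ g : G, ∀ a ∈ 𝒜.comp g, ε g * a = a
  mul_right : ∀ g : G, ∀ a ∈ 𝒜.comp g, a * ε g⁻¹ = a

/-- `𝒜` is an epsilon-strongly graded ring. -/
def IsEpsilonStrong (𝒜 : RingGrading G A) : Prop :=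
  ∃ ε : G → A, IsEpsilonFamily 𝒜 ε

/-- `𝒜` is an epsilon-crossed product: it is epsilon-strongly graded and each
homogeneous component contains an epsilon-invertible element. By Theorem 35 of
[Nystedt–Öinert–Pinedo], this is equivalent to being a partial crossed product. -/
def IsEpsilonCrossedProduct (𝒜 : RingGrading G A) : Prop :=
  ∃ ε : G → A, IsEpsilonFamily 𝒜 ε ∧
    ∀ g : G, ∃ a ∈ 𝒜.comp g, ∃ b ∈ 𝒜.comp g⁻¹, a * b = ε g ∧ b * a = ε g⁻¹


private lemma sgMul_exists_left_factor {B : Type*} [Ring B]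
    (S T U V : AddSubgroup B) (k : B)
    (hS : ∀ s ∈ S, ∃ r ∈ U, s = k * r)
    (hT : ∀ r ∈ U, ∀ t ∈ T, r * t ∈ V)
    {x : B} (hx : x ∈ sgMul S T) : ∃ c ∈ V, x = k * c := by
  induction hx using AddSubgroup.closure_induction with
  | mem y hy =>
    obtain ⟨s, hs, t, ht, rfl⟩ := hy
    obtain ⟨r, hr, rfl⟩ := hS s hs
    exact ⟨r * t, hT r hr t ht, mul_assoc ..⟩
  | zero => exact ⟨0, zero_mem _, by simp⟩
  | add a b _ _ iha ihb =>
    obtain ⟨c, hc, rfl⟩ := iha; obtain ⟨d, hd, rfl⟩ := ihb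
    exact ⟨c + d, add_mem hc hd, (mul_add ..).symm⟩
  | neg a _ iha =>
    obtain ⟨c, hc, rfl⟩ := iha; exact ⟨-c, neg_mem hc, (mul_neg ..).symm⟩

private lemma sgMul_exists_right_factor {B : Type*} [Ring B]
    (S T U V : AddSubgroup B) (k : B)
    (hT : ∀ t ∈ T, ∃ r ∈ U, t = r * k)
    (hS : ∀ s ∈ S, ∀ r ∈ U, s * r ∈ V)
    {x : B} (hx : x ∈ sgMul S T) : ∃ c ∈ V, x = c * k := by
  induction hx using AddSubgroup.closure_induction with
  | mem y hy =>
    obtain ⟨s, hs, t, ht, rfl⟩ := hy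
    obtain ⟨r, hr, rfl⟩ := hT t ht
    exact ⟨s * r, hS s hs r hr, (mul_assoc ..).symm⟩
  | zero => exact ⟨0, zero_mem _, by simp⟩
  | add a b _ _ iha ihb =>
    obtain ⟨c, hc, rfl⟩ := iha; obtain ⟨d, hd, rfl⟩ := ihb
    exact ⟨c + d, add_mem hc hd, (add_mul ..).symm⟩
  | neg a _ iha =>
    obtain ⟨c, hc, rfl⟩ := iha; exact ⟨-c, neg_mem hc, (neg_mul ..).symm⟩

private lemma diagonal_mul_eq_sum_stdBasis {n : ℕ} (s t : A) :
    (Matrix.diagonal fun _ : Fin n => s * t)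
      = ∑ i : Fin n, Matrix.single i i s * Matrix.single i i t := by
  simp only [Matrix.single_mul_single_same]
  ext i j
  simp only [Matrix.sum_apply, Matrix.single, Matrix.of_apply,
    Matrix.diagonal_apply]
  rcases eq_or_ne i j with h | h
  · subst h
    rw [if_pos rfl, Finset.sum_eq_single i (fun x _ hx => if_neg (by simp [hx, Ne.symm hx]))
      (by simp), if_pos ⟨rfl, rfl⟩]
  · rw [if_neg h]
    exact (Finset.sum_eq_zero fun x _ => if_neg (fun hc => h (hc.1.symm.trans hc.2))).symm

private lemma diag_mem_sgMul {n : ℕ}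
    (S T : AddSubgroup A) (S' T' : AddSubgroup (Matrix (Fin n) (Fin n) A))
    (hS : ∀ a ∈ S, ∀ i : Fin n, Matrix.single i i a ∈ S')
    (hT : ∀ a ∈ T, ∀ i : Fin n, Matrix.single i i a ∈ T')
    {x : A} (hx : x ∈ sgMul S T) :
    (Matrix.diagonal fun _ : Fin n => x) ∈ sgMul S' T' := by
  induction hx using AddSubgroup.closure_induction with
  | mem y hy =>
    obtain ⟨s, hs, t, ht, rfl⟩ := hy
    rw [diagonal_mul_eq_sum_stdBasis]
    exact AddSubgroup.sum_mem _ fun i _ =>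
      AddSubgroup.subset_closure ⟨_, hS s hs i, _, hT t ht i, rfl⟩
  | zero => simpa using (sgMul S' T').zero_mem
  | add a b _ _ iha ihb =>
    have := (sgMul S' T').add_mem iha ihb
    rw [Matrix.diagonal_add] at this
    exact this
  | neg a _ iha =>
    have := (sgMul S' T').neg_mem iha
    rw [Matrix.diagonal_neg] at this
    exact this

/-- Let `A` be epsilon-strongly `G`-graded with epsilon-family `ε`,
and grade `B = Mₙ(A)` by `B_g = Mₙ(A_g)`.  Then `B` is epsilon-strongly graded with
epsilon-elements `E_g = ε_g • Iₙ`, and `B` is an epsilon-crossed product (equivalently,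
a partial crossed product) iff there is `κ : G → Mₙ(A)` with `κ(g) ∈ Mₙ(A_g)` and
`Mₙ(R)·κ(g) = Mₙ(A_g) = κ(g)·Mₙ(R)` for all `g`. -/
theorem matrix_epsilonCrossedProduct_iff (𝒜 : RingGrading G A) (ε : G → A)
    (hε : IsEpsilonFamily 𝒜 ε) (n : ℕ) (hn : 0 < n)
    (ℬ : RingGrading G (Matrix (Fin n) (Fin n) A))
    (hcomp : ∀ (g : G) (X : Matrix (Fin n) (Fin n) A),
      X ∈ ℬ.comp g ↔ ∀ i j : Fin n, X i j ∈ 𝒜.comp g) :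
    IsEpsilonFamily ℬ (fun g => Matrix.diagonal fun _ => ε g) ∧
      (IsEpsilonCrossedProduct ℬ ↔
        ∃ κ : G → Matrix (Fin n) (Fin n) A, ∀ g : G,
          κ g ∈ ℬ.comp g ∧
          (ℬ.comp 1).map (AddMonoidHom.mulRight (κ g)) = ℬ.comp g ∧
          (ℬ.comp 1).map (AddMonoidHom.mulLeft (κ g)) = ℬ.comp g) := by
  have hstd : ∀ (g : G) (a : A), a ∈ 𝒜.comp g → ∀ i : Fin n,
      Matrix.single i i a ∈ ℬ.comp g := by
    intro g a ha i
    rw [hcomp]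
    intro i' j'
    simp only [Matrix.single, Matrix.of_apply]
    split
    · exact ha
    · exact zero_mem _
  have hfam : IsEpsilonFamily ℬ (fun g => Matrix.diagonal fun _ => ε g) := by
    refine ⟨fun g => ?_, fun g X hX => ?_, fun g X hX => ?_⟩
    · exact diag_mem_sgMul _ _ _ _ (hstd g) (hstd g⁻¹) (hε.mem g)
    · ext i j
      rw [Matrix.diagonal_mul]
      exact hε.mul_left g _ ((hcomp g X).1 hX i j)
    · ext i j
      rw [Matrix.mul_diagonal]
      exact hε.mul_right g _ ((hcomp g X).1 hX i j)
  refine ⟨hfam, ?_, ?_⟩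
  · rintro ⟨ε', hε', hinv⟩
    refine ⟨fun g => (hinv g).choose, fun g => ?_⟩
    obtain ⟨ha, b, hb, hab, hba⟩ := (hinv g).choose_spec
    set a := (hinv g).choose with ha_def
    refine ⟨ha, ?_, ?_⟩
    · apply le_antisymm
      · rintro y hy
        obtain ⟨X, hX, rfl⟩ := AddSubgroup.mem_map.mp hy
        have := ℬ.mul_mem hX ha
        rw [one_mul] at this
        exact this
      · intro Y hY
        refine AddSubgroup.mem_map.mpr ⟨Y * b, ?_, ?_⟩
        · have := ℬ.mul_mem hY hb
          rw [mul_inv_cancel] at this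
          exact this
        · show (Y * b) * a = Y
          rw [mul_assoc, hba]
          exact hε'.mul_right g Y hY
    · apply le_antisymm
      · rintro y hy
        obtain ⟨X, hX, rfl⟩ := AddSubgroup.mem_map.mp hy
        have := ℬ.mul_mem ha hX
        rw [mul_one] at this
        exact this
      · intro Y hY
        refine AddSubgroup.mem_map.mpr ⟨b * Y, ?_, ?_⟩
        · have := ℬ.mul_mem hb hY
          rw [inv_mul_cancel] at this
          exact this
        · show a * (b * Y) = Y
          rw [← mul_assoc, hab]
          exact hε'.mul_left g Y hY
  · rintro ⟨κ, hκ⟩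
    refine ⟨_, hfam, fun g => ?_⟩
    obtain ⟨hg, hR, hL⟩ := hκ g
    have hSleft : ∀ s ∈ ℬ.comp g, ∃ r ∈ ℬ.comp 1, s = κ g * r := by
      intro s hs
      rw [← hL] at hs
      obtain ⟨r, hr, rfl⟩ := AddSubgroup.mem_map.mp hs
      exact ⟨r, hr, rfl⟩
    have hSright : ∀ s ∈ ℬ.comp g, ∃ r ∈ ℬ.comp 1, s = r * κ g := by
      intro s hs
      rw [← hR] at hs
      obtain ⟨r, hr, rfl⟩ := AddSubgroup.mem_map.mp hs
      exact ⟨r, hr, rfl⟩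
    obtain ⟨b', hb', hEg⟩ :=
      sgMul_exists_left_factor (ℬ.comp g) (ℬ.comp g⁻¹) (ℬ.comp 1) (ℬ.comp g⁻¹)
        (κ g) hSleft
        (fun r hr t ht => by have := ℬ.mul_mem hr ht; rwa [one_mul] at this)
        (hfam.mem g)
    obtain ⟨b'', hb'', hEg'⟩ :=
      sgMul_exists_right_factor (ℬ.comp g⁻¹) (ℬ.comp g⁻¹⁻¹) (ℬ.comp 1) (ℬ.comp g⁻¹)
        (κ g)
        (fun t ht => hSright t (by rwa [inv_inv] at ht))
        (fun s hs r hr => by have := ℬ.mul_mem hs hr; rwa [mul_one] at this)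
        (hfam.mem g⁻¹)
    have hbb : b' = b'' := by
      have h1 : b'' * (κ g * b') = b'' := by
        rw [← hEg]
        have := hfam.mul_right g⁻¹ b'' hb''
        rwa [inv_inv] at this
      have h2 : (b'' * κ g) * b' = b' := by
        rw [← hEg']
        exact hfam.mul_left g⁻¹ b' hb'
      rw [← h2, mul_assoc, h1]
    refine ⟨κ g, hg, b', hb', hEg.symm, ?_⟩
    rw [hbb]
    exact hEg'.symm
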